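/- arXiv:2601.15229 — 8 statements merged into one kernel-verified Lean document; each statement's English description precedes it below -/
import Mathlib

section
/- If (a,b) is an integral point on the conic x² - kxy + y² = k with k a positive integer, then k is a perfect square. -/
lemma key_vieta : ∀ N : ℕ, ∀ a b k : ℤ, 1 ≤ k → 0 ≤ a → a ≤ b →
    (a + b).toNat ≤ N → a ^ 2 + b ^ 2 = k * (a * b + 1) → ∃ n : ℤ, k = n ^ 2 := by
  intro N
  induction N using Nat.strong_induction_on with
  | _ N ih =>
    intro a b k hk ha hab hN heq
    rcases eq_or_lt_of_le ha with h0 | ha1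
    · subst h0
      exact ⟨b, by linear_combination -heq⟩
    · have ha1' : 1 ≤ a := ha1
      have hb1 : 1 ≤ b := le_trans ha1' hab
      set c := k * a - b with hc
      have hceq : c ^ 2 + a ^ 2 = k * (c * a + 1) := by
        simp only [hc]; linear_combination heq
      have hc0 : 0 ≤ c := by
        by_contra h'
        push_neg at h'
        have hc1 : c ≤ -1 := by omega
        nlinarith [sq_nonneg c, sq_nonneg a, mul_nonneg (sub_nonneg.mpr hk) (neg_nonneg.mpr (show c * a + 1 ≤ 0 by nlinarith))]
      have hca : c < a := by
        by_contra h'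
        push_neg at h'
        nlinarith [mul_nonneg (sub_nonneg.mpr h') (by linarith : (0:ℤ) ≤ b), mul_nonneg (sub_nonneg.mpr hab) (by linarith : (0:ℤ) ≤ a)]
      have hlt : (c + a).toNat < N := by omega
      exact ih (c + a).toNat hlt c a k hk hc0 (le_of_lt hca) le_rfl hceq

theorem stmt_1 (a b k : ℤ) (hk : 1 ≤ k)
    (h : a ^ 2 - k * a * b + b ^ 2 = k) :
    ∃ n : ℤ, k = n ^ 2 := by
  have heq : a ^ 2 + b ^ 2 = k * (a * b + 1) := by linear_combination h
  have hab0 : 0 ≤ a * b := by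
    by_contra h'
    push_neg at h'
    have h1 : a * b + 1 ≤ 0 := by omega
    nlinarith [sq_nonneg (a + b), mul_nonneg (sub_nonneg.mpr hk) (neg_nonneg.mpr h1)]
  have heq' : |a| ^ 2 + |b| ^ 2 = k * (|a| * |b| + 1) := by
    rw [sq_abs, sq_abs, ← abs_mul, abs_of_nonneg hab0]
    exact heq
  rcases le_total |a| |b| with hle | hle
  · exact key_vieta (|a| + |b|).toNat |a| |b| k hk (abs_nonneg a) hle le_rfl heq'
  · exact key_vieta (|b| + |a|).toNat |b| |a| k hk (abs_nonneg b) hle le_rfl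
      (by linarith [heq'])
end

section
/- Define the sequence (aₙ) by a₀ = 0, a₁ = m, a_{n+2} = m²·a_{n+1} - aₙ, where m is a positive integer. Then for all n ≥ 0, the point (aₙ, a_{n+1}) lies on the conic x² - m²·x·y + y² = m². -/
theorem stmt_4 (m : ℤ) (hm : 0 < m) (a : ℕ → ℤ)
    (h0 : a 0 = 0) (h1 : a 1 = m)
    (hrec : ∀ n, a (n + 2) = m ^ 2 * a (n + 1) - a n) :
    ∀ n, (a n) ^ 2 - m ^ 2 * (a n) * (a (n + 1)) + (a (n + 1)) ^ 2 = m ^ 2 := by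
  intro n
  induction n with
  | zero => simp [h0, h1]
  | succ k ih =>
    rw [hrec k]
    linear_combination ih
end

section
/- Let k be a positive integer and let (a,b) be a pair of positive integers with a ≠ b satisfying a² - k·a·b + b² = k. Then there exist nonnegative integers a', b' with a'² - k·a'·b' + b'² = k and a' + b' < a + b. -/
theorem stmt_5 (k a b : ℤ) (hk : 1 ≤ k) (ha : 0 < a) (hb : 0 < b)
    (hab : a ≠ b) (h : a ^ 2 - k * a * b + b ^ 2 = k) :
    ∃ a' b' : ℤ, 0 ≤ a' ∧ 0 ≤ b' ∧
      a' ^ 2 - k * a' * b' + b' ^ 2 = k ∧ a' + b' < a + b := by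
  rcases lt_or_gt_of_ne hab with hlt | hgt
  · -- b > a : jump b to k*a - b
    refine ⟨a, k * a - b, ha.le, ?_, by ring_nf; linarith [h], ?_⟩
    · by_contra hneg
      push_neg at hneg
      have h1 : k * a - b ≤ -1 := by linarith
      nlinarith [mul_pos ha hb, sq_nonneg (k * a - b)]
    · nlinarith [sq_nonneg (a - b)]
  · -- a > b : jump a to k*b - a
    refine ⟨k * b - a, b, ?_, hb.le, by ring_nf; linarith [h], ?_⟩
    · by_contra hneg
      push_neg at hneg
      have h1 : k * b - a ≤ -1 := by linarith
      nlinarith [mul_pos ha hb, sq_nonneg (k * b - a)]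
    · nlinarith [sq_nonneg (a - b)]
end

section
/- Let p > 2 and 0 < q ≤ p + 1 be integers. If the equation x² - p·x·y + y² = q has a solution in integers, then q is a perfect square. -/
theorem key_aux (p q : ℤ) (hp : 2 < p) (hq0 : 0 < q) (hq1 : q ≤ p + 1) :
    ∀ N : ℕ, ∀ x y : ℤ, x.natAbs + y.natAbs < N → x ^ 2 - p * x * y + y ^ 2 = q →
    ∃ n : ℤ, q = n ^ 2 := by
  intro N
  induction N with
  | zero => intro x y h; omega
  | succ N ih =>
    intro x y hsum heq
    rcases eq_or_ne x 0 with hx | hx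
    · subst hx; exact ⟨y, by linear_combination -heq⟩
    rcases eq_or_ne y 0 with hy | hy
    · subst hy; exact ⟨x, by linear_combination -heq⟩
    have hx2 : 1 ≤ x ^ 2 := by
      rcases hx.lt_or_gt with h | h
      · nlinarith
      · nlinarith
    have hy2 : 1 ≤ y ^ 2 := by
      rcases hy.lt_or_gt with h | h
      · nlinarith
      · nlinarith
    have hxy : 0 < x * y := by
      rcases lt_trichotomy (x * y) 0 with h | h | h
      · exfalso
        have h1 : x * y ≤ -1 := by omega
        nlinarith
      · exfalso
        rcases mul_eq_zero.mp h with h' | h' <;> simp_all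
      · exact h
    -- descent step for positive ordered solutions
    have descent : ∀ u v : ℤ, 1 ≤ v → v ≤ u → u.natAbs + v.natAbs ≤ N →
        u ^ 2 - p * u * v + v ^ 2 = q → ∃ n : ℤ, q = n ^ 2 := by
      intro u v hv huv hN heq'
      have hu : 1 ≤ u := le_trans hv huv
      have h1 : (p * v - u) ^ 2 - p * (p * v - u) * v + v ^ 2 = q := by
        linear_combination heq'
      have h2 : (p * v - u) * u = v ^ 2 - q := by linear_combination -heq'
      rcases lt_trichotomy (p * v - u) 0 with hz | hz | hz
      · exfalso
        have hw : p * v - u ≤ -1 := by omega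
        nlinarith [sq_nonneg (p * v - u), mul_pos (by linarith : (0:ℤ) < -(p*v-u)) (by linarith : (0:ℤ) < v)]
      · refine ⟨v, ?_⟩
        rw [hz] at h2
        linarith
      · -- p*v - u > 0 : descent
        have hlt : p * v - u < v := by nlinarith
        have hltu : p * v - u < u := lt_of_lt_of_le hlt huv
        exact ih (p * v - u) v (by omega) h1
    -- reduce to positive ordered case
    have habs : |x| ^ 2 - p * |x| * |y| + |y| ^ 2 = q := by
      have h1 : |x| * |y| = x * y := by
        rw [← abs_mul, abs_of_pos hxy]
      have h2 : |x| ^ 2 = x ^ 2 := sq_abs x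
      have h3 : |y| ^ 2 = y ^ 2 := sq_abs y
      rw [h2, h3]
      calc x ^ 2 - p * |x| * |y| + y ^ 2 = x ^ 2 - p * (|x| * |y|) + y ^ 2 := by ring
        _ = x ^ 2 - p * (x * y) + y ^ 2 := by rw [h1]
        _ = q := by linarith [heq]
    have hax : 1 ≤ |x| := by
      have := abs_pos.mpr hx; omega
    have hay : 1 ≤ |y| := by
      have := abs_pos.mpr hy; omega
    have hnx : |x|.natAbs = x.natAbs := by
      rcases abs_choice x with h | h <;> simp [h]
    have hny : |y|.natAbs = y.natAbs := by
      rcases abs_choice y with h | h <;> simp [h]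
    rcases le_total (|y|) (|x|) with hle | hle
    · exact descent (|x|) (|y|) hay hle (by omega) habs
    · refine descent (|y|) (|x|) hax hle (by omega) ?_
      linear_combination habs

theorem stmt_7 (p q : ℤ) (hp : 2 < p) (hq0 : 0 < q) (hq1 : q ≤ p + 1)
    (h : ∃ x y : ℤ, x ^ 2 - p * x * y + y ^ 2 = q) :
    ∃ n : ℤ, q = n ^ 2 := by
  obtain ⟨x, y, hxy⟩ := h
  exact key_aux p q hp hq0 hq1 (x.natAbs + y.natAbs + 1) x y (by omega) hxy
end

section
/- Let p ≥ 3 be an integer. The equation x² - p·x·y + y² = q has no integer solutions for any integer q with 3 - p ≤ q < 0. -/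
lemma aux_8 (p q : ℤ) (hp : 3 ≤ p) (hq0 : 3 - p ≤ q) (hq1 : q < 0) :
    ∀ n : ℕ, ∀ x y : ℤ, x.toNat = n → 1 ≤ y → y ≤ x → x ^ 2 - p * x * y + y ^ 2 ≠ q := by
  intro n
  induction n using Nat.strong_induction_on with
  | _ n ih =>
    intro x y hxn hy hyx heq
    have hx1 : 1 ≤ x := le_trans hy hyx
    rcases eq_or_lt_of_le hyx with hxy | hlt
    · -- x = y
      subst hxy
      nlinarith [mul_nonneg (by linarith : (0:ℤ) ≤ p - 2) (by nlinarith [sq_nonneg y] : (0:ℤ) ≤ y ^ 2 - 1)]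
    · -- y < x, Vieta jump: x' = p*y - x
      have hprod : x * (p * y - x) = y ^ 2 - q := by linear_combination -heq
      have hx'eq : (p * y - x) ^ 2 - p * (p * y - x) * y + y ^ 2 = q := by
        linear_combination heq
      have hx'pos : 1 ≤ p * y - x := by nlinarith
      rcases lt_or_ge (p * y - x) y with hcase | hcase
      · -- smaller solution (y, x')
        have heq2 : y ^ 2 - p * y * (p * y - x) + (p * y - x) ^ 2 = q := by
          linear_combination hx'eq
        exact ih y.toNat (by omega) y (p * y - x) rfl hx'pos (le_of_lt hcase) heq2
      · rcases lt_or_ge (p * y - x) x with hcase2 | hcase2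
        · -- smaller solution (x', y)
          exact ih (p * y - x).toNat (by omega) (p * y - x) y rfl hy hcase hx'eq
        · -- x' ≥ x : arithmetic contradiction
          have h1 : x ^ 2 ≤ y ^ 2 + p - 3 := by nlinarith
          nlinarith [mul_nonneg (mul_nonneg (by linarith : (0:ℤ) ≤ p - 2) (by linarith : (0:ℤ) ≤ x)) (by linarith : (0:ℤ) ≤ y - 1),
            mul_nonneg (by linarith : (0:ℤ) ≤ y - 1) (by linarith : (0:ℤ) ≤ 2 * x - y - 1),
            mul_nonneg (by linarith : (0:ℤ) ≤ x - y - 1) (by linarith : (0:ℤ) ≤ x + y),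
            mul_pos (by linarith : (0:ℤ) < x) (by linarith : (0:ℤ) < x - 1)]

theorem stmt_8 (p q : ℤ) (hp : 3 ≤ p) (hq0 : 3 - p ≤ q) (hq1 : q < 0) :
    ¬ ∃ x y : ℤ, x ^ 2 - p * x * y + y ^ 2 = q := by
  rintro ⟨x, y, heq⟩
  have hxy : 0 < x * y := by nlinarith [sq_nonneg x, sq_nonneg y]
  have key : ∀ a b : ℤ, 1 ≤ b → b ≤ a → a ^ 2 - p * a * b + b ^ 2 ≠ q := fun a b h1 h2 =>
    aux_8 p q hp hq0 hq1 a.toNat a b rfl h1 h2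
  rcases lt_or_ge 0 x with hx | hx
  · have hy : 0 < y := by by_contra h; push_neg at h; nlinarith
    rcases le_total y x with h | h
    · exact key x y hy h heq
    · exact key y x hx h (by linear_combination heq)
  · have hx' : x < 0 := by
      rcases lt_or_eq_of_le hx with h | h
      · exact h
      · subst h; nlinarith [sq_nonneg y]
    have hy : y < 0 := by by_contra h; push_neg at h; nlinarith
    rcases le_total (-y) (-x) with h | h
    · exact key (-x) (-y) (by linarith) h (by linear_combination heq)
    · exact key (-y) (-x) (by linarith) h (by linear_combination heq)
end

section
/- If x and y are positive integers such that 3xy - 1 divides x² + y², then (x² + y²)/(3xy - 1) = 1. -/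
private lemma vieta_step (x y k : ℤ) (hy : 0 < y) (hxy : y < x) (hk : 0 < k)
    (heq : x ^ 2 + y ^ 2 = k * (3 * x * y - 1)) :
    0 < 3 * k * y - x ∧ 3 * k * y - x < x ∧
      (3 * k * y - x) ^ 2 + y ^ 2 = k * (3 * (3 * k * y - x) * y - 1) := by
  have hx : 0 < x := lt_trans hy hxy
  have hprod : x * (3 * k * y - x) = y ^ 2 + k := by nlinarith [heq]
  have hpos : 0 < 3 * k * y - x := by
    by_contra hcon
    push_neg at hcon
    nlinarith
  have hklt : k < x ^ 2 - y ^ 2 := by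
    by_contra hcon
    push_neg at hcon
    nlinarith [mul_pos hx hy, sq_nonneg (x - y), sq_nonneg (x + y)]
  refine ⟨hpos, ?_, by nlinarith [heq]⟩
  nlinarith [hprod]

private lemma vieta_key (n : ℕ) : ∀ x y k : ℤ, 0 < x → 0 < y → 0 < k →
    x + y ≤ (n : ℤ) → x ^ 2 + y ^ 2 = k * (3 * x * y - 1) → k = 1 := by
  induction n using Nat.strong_induction_on with
  | _ n ih =>
    intro x y k hx hy hk hn heq
    rcases lt_trichotomy x y with h | h | h
    · obtain ⟨h1, h2, h3⟩ := vieta_step y x k hx h hk (by linarith [heq])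
      have hn' : n ≠ 0 := by rintro rfl; simp at hn; omega
      refine ih (n - 1) (by omega) (3 * k * x - y) x k h1 hx hk ?_ (by linarith [h3])
      have : ((n - 1 : ℕ) : ℤ) = (n : ℤ) - 1 := by
        have : 1 ≤ n := Nat.one_le_iff_ne_zero.mpr hn'
        push_cast [Nat.cast_sub this]; ring
      omega
    · subst h
      have hdvd : (3 * x ^ 2 - 1) ∣ 2 := by
        have hd : (3 * x ^ 2 - 1) ∣ 2 * x ^ 2 := ⟨k, by linarith [heq]⟩
        have : (2 : ℤ) = 3 * (2 * x ^ 2) - 2 * (3 * x ^ 2 - 1) := by ring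
        rw [this]
        exact dvd_sub (Dvd.dvd.mul_left hd 3) (Dvd.dvd.mul_left dvd_rfl 2)
      have hle := Int.le_of_dvd (by norm_num) hdvd
      have hx1 : x = 1 := by nlinarith
      subst hx1
      linarith [heq]
    · obtain ⟨h1, h2, h3⟩ := vieta_step x y k hy h hk heq
      have hn' : n ≠ 0 := by rintro rfl; simp at hn; omega
      refine ih (n - 1) (by omega) (3 * k * y - x) y k h1 hy hk ?_ (by linarith [h3])
      have : ((n - 1 : ℕ) : ℤ) = (n : ℤ) - 1 := by
        have : 1 ≤ n := Nat.one_le_iff_ne_zero.mpr hn'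
        push_cast [Nat.cast_sub this]; ring
      omega

theorem stmt_10 (x y : ℤ) (hx : 0 < x) (hy : 0 < y)
    (h : (3 * x * y - 1) ∣ (x ^ 2 + y ^ 2)) :
    (x ^ 2 + y ^ 2) / (3 * x * y - 1) = 1 := by
  set k := (x ^ 2 + y ^ 2) / (3 * x * y - 1) with hkdef
  have hd : 0 < 3 * x * y - 1 := by nlinarith
  have heq : x ^ 2 + y ^ 2 = (3 * x * y - 1) * k := by
    rw [hkdef, Int.mul_ediv_cancel' h]
  have hk : 0 < k := by
    rcases lt_trichotomy k 0 with hc | hc | hc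
    · nlinarith
    · nlinarith [hc ▸ heq]
    · exact hc
  exact vieta_key (x + y).toNat x y k hx hy hk (by omega) (by linarith [heq])
end

section
/- For all integers n ≥ 1, consecutive odd-indexed Fibonacci numbers satisfy F_{2n-1}² + F_{2n+1}² = 3·F_{2n-1}·F_{2n+1} - 1. -/
lemma cassini : ∀ m : ℕ, (Nat.fib m : ℤ) * Nat.fib (m + 2) - (Nat.fib (m + 1) : ℤ) ^ 2 = (-1) ^ (m + 1)
  | 0 => by simp
  | m + 1 => by
    have ih := cassini m
    have h1 : (Nat.fib (m + 3) : ℤ) = Nat.fib (m + 1) + Nat.fib (m + 2) := by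
      have := @Nat.fib_add_two (m + 1); push_cast [this]; ring
    have h2 : (Nat.fib (m + 2) : ℤ) = Nat.fib m + Nat.fib (m + 1) := by
      have := @Nat.fib_add_two m; push_cast [this]; ring
    calc (Nat.fib (m+1) : ℤ) * Nat.fib (m + 3) - (Nat.fib (m + 2) : ℤ) ^ 2
        = -((Nat.fib m : ℤ) * Nat.fib (m + 2) - (Nat.fib (m + 1) : ℤ) ^ 2) := by
          rw [h1]; rw [h2]; ring
      _ = (-1) ^ (m + 2) := by rw [ih]; ring

theorem stmt_12 (n : ℕ) (hn : 1 ≤ n) :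
    (Nat.fib (2 * n - 1) : ℤ) ^ 2 + (Nat.fib (2 * n + 1) : ℤ) ^ 2 =
      3 * Nat.fib (2 * n - 1) * Nat.fib (2 * n + 1) - 1 := by
  obtain ⟨m, rfl⟩ := Nat.exists_eq_add_of_le hn
  have e1 : 2 * (1 + m) - 1 = 2 * m + 1 := by omega
  have e2 : 2 * (1 + m) + 1 = 2 * m + 3 := by omega
  rw [e1, e2]
  have hc := cassini (2 * m + 1)
  have h1 : (Nat.fib (2 * m + 3) : ℤ) = Nat.fib (2 * m + 1) + Nat.fib (2 * m + 2) := by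
    have := @Nat.fib_add_two (2 * m + 1); push_cast [this]; ring
  have hpow : ((-1 : ℤ)) ^ (2 * m + 1 + 1) = 1 := by
    rw [show 2 * m + 1 + 1 = 2 * (m + 1) by ring, pow_mul]; norm_num
  rw [hpow] at hc
  rw [h1] at hc ⊢
  nlinarith [hc]
end

section
/- Let n ≥ 2 be an integer and m = n² - 1. If |x² - m·y²| = ν has a solution in integers x, y for some integer ν with 0 < ν < 2n - 2, then ν is a perfect square. -/
theorem stmt_18_aux (n ν : ℤ) (hn : 2 ≤ n) (hν0 : 0 < ν) (hν1 : ν < 2 * n - 2) :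
    ∀ k : ℕ, ∀ x y : ℤ, y.natAbs = k → |x ^ 2 - (n ^ 2 - 1) * y ^ 2| = ν →
    ∃ a : ℤ, ν = a ^ 2 := by
  intro k
  induction k using Nat.strong_induction_on with
  | _ k ih =>
    intro x y hky hxy
    rcases eq_or_ne y 0 with hy0 | hy0
    · subst hy0
      refine ⟨|x|, ?_⟩
      rw [← hxy]
      simp [sq_abs, abs_sq]
    · set X := |x| with hX
      set Y := |y| with hY
      have hY1 : 1 ≤ Y := by
        have := abs_pos.mpr hy0
        omega
      have hxy' : |X ^ 2 - (n ^ 2 - 1) * Y ^ 2| = ν := by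
        rw [hX, hY, sq_abs, sq_abs]; exact hxy
      have h1 : -ν ≤ X ^ 2 - (n ^ 2 - 1) * Y ^ 2 := neg_le_of_abs_le hxy'.le
      have h2 : X ^ 2 - (n ^ 2 - 1) * Y ^ 2 ≤ ν := le_of_abs_le hxy'.le
      have hX0 : 0 ≤ X := abs_nonneg x
      have hν2 : ν ≤ 2 * n - 3 := by omega
      have hlow : (n - 1) * Y < X := by
        nlinarith [sq_nonneg (X - (n - 1) * Y), sq_nonneg (X + (n - 1) * Y),
          mul_pos (lt_of_lt_of_le one_pos hY1) (lt_of_lt_of_le one_pos hY1)]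
      have hhigh : X < (n + 1) * Y := by
        have hsq : X ^ 2 < ((n + 1) * Y) ^ 2 := by
          nlinarith [mul_pos (lt_of_lt_of_le one_pos hY1) (lt_of_lt_of_le one_pos hY1)]
        exact lt_of_pow_lt_pow_left₀ 2 (by positivity) hsq
      have habs : |n * Y - X| < Y := by
        rw [abs_lt]
        constructor <;> nlinarith
      have hnew : |(n * X - (n ^ 2 - 1) * Y) ^ 2 - (n ^ 2 - 1) * (n * Y - X) ^ 2| = ν := by
        rw [← hxy']
        congr 1
        ring
      have hdec : (n * Y - X).natAbs < k := by
        have e1 : ((n * Y - X).natAbs : ℤ) = |n * Y - X| := (Int.abs_eq_natAbs _).symm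
        have e2 : (Y.natAbs : ℤ) = Y := Int.natAbs_of_nonneg (abs_nonneg y)
        have e3 : Y.natAbs = k := by rw [hY, Int.natAbs_abs, hky]
        omega
      exact ih _ hdec _ _ rfl hnew

theorem stmt_18 (n ν : ℤ) (hn : 2 ≤ n) (hν0 : 0 < ν) (hν1 : ν < 2 * n - 2)
    (h : ∃ x y : ℤ, |x ^ 2 - (n ^ 2 - 1) * y ^ 2| = ν) :
    ∃ a : ℤ, ν = a ^ 2 := by
  obtain ⟨x, y, hxy⟩ := h
  exact stmt_18_aux n ν hn hν0 hν1 y.natAbs x y rfl hxy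
end
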